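/- In the lattice of bi-leveled trees, the join of (t;T) and (s;S) is (sup{t,s}; U), where sup{t,s} is the join in the Tamari lattice and U is the largest upper order ideal of the node poset of sup{t,s} contained in T ∩ S. -/

import Mathlib

/-- Planar rooted binary trees. -/
inductive PBT : Type
  | leaf : PBT
  | node : PBT → PBT → PBT
deriving DecidableEq

namespace PBT

/-- Number of internal nodes. -/
def numNodes : PBT → ℕ
  | leaf => 0
  | node l r => numNodes l + numNodes r + 1

/-- Number of leaves. -/
def numLeaves : PBT → ℕ
  | leaf => 1
  | node l r => numLeaves l + numLeaves r

/-- A single left-to-right (Tamari) rotation somewhere in a tree. -/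
inductive Rot : PBT → PBT → Prop
  | here (a b c : PBT) : Rot (node (node a b) c) (node a (node b c))
  | left {l l' : PBT} (r : PBT) : Rot l l' → Rot (node l r) (node l' r)
  | right (l : PBT) {r r' : PBT} : Rot r r' → Rot (node l r) (node l r')

/-- The Tamari order: reflexive-transitive closure of rotations. -/
def tamariLE : PBT → PBT → Prop := Relation.ReflTransGen Rot

/-- Positions of internal nodes as paths from the root
(`false` = go left, `true` = go right). -/
def isNode : PBT → List Bool → Prop
  | leaf, _ => False
  | node _ _, [] => True
  | node l _, (false :: p) => isNode l p
  | node _ r, (true :: p) => isNode r p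

/-- 1-based left-to-right (in-order) index of a node position. -/
def idx : PBT → List Bool → ℕ
  | leaf, _ => 0
  | node l _, [] => numNodes l + 1
  | node l _, (false :: p) => idx l p
  | node l r, (true :: p) => numNodes l + 1 + idx r p

/-- `nodeLE t i j` : in the node poset of `t` (root maximal, a node is below all
of its ancestors), the node with in-order index `i` is ≤ the node with index `j`
(i.e. the position of `j` is a prefix of the position of `i`). -/
def nodeLE (t : PBT) (i j : ℕ) : Prop :=
  ∃ p q : List Bool, isNode t p ∧ isNode t q ∧ idx t p = i ∧ idx t q = j ∧ q <+: p

end PBT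

/-- Bi-leveled trees with `n` internal nodes: a planar binary tree together with
an upper order ideal `T` of its node poset (nodes indexed `1,…,n` left to right)
containing the leftmost node (index 1) as a minimal element. -/
structure BLT (n : ℕ) where
  t : PBT
  hn : t.numNodes = n
  T : Set ℕ
  hsub : T ⊆ Set.Icc 1 n
  hideal : ∀ i j, PBT.nodeLE t i j → i ∈ T → j ∈ T
  hone : (1 : ℕ) ∈ T
  hmin : ∀ i ∈ T, PBT.nodeLE t i 1 → i = 1

/-- The partial order on bi-leveled trees: `(s;S) ≤ (t;T)` iff `s ≤ t` in the
Tamari order and `T ⊆ S`. -/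
instance BLT.instPreorder (n : ℕ) : Preorder (BLT n) where
  le x y := PBT.tamariLE x.t y.t ∧ y.T ⊆ x.T
  le_refl x := ⟨Relation.ReflTransGen.refl, le_refl _⟩
  le_trans x y z h h' := ⟨h.1.trans h'.1, h'.2.trans h.2⟩

/-- Trees with `n` internal nodes, as a preorder under the Tamari order. -/
instance Yn.instPreorder (n : ℕ) : Preorder {t : PBT // t.numNodes = n} where
  le x y := PBT.tamariLE x.1 y.1
  le_refl x := Relation.ReflTransGen.refl
  le_trans x y z h h' := Relation.ReflTransGen.trans h h'

/-!
Number the nodes of a tree in order. The nodes of the subtree rooted at node `j` then form an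
interval `[subtreeStart t j, subtreeEnd t j]` of indices containing `j`, and a rotation can
only move both endpoints of every such interval to the right. Hence, going up in the Tamari
order, a node can only lose descendants to its left and only gain descendants to its right.

In a common upper bound `(w;W)` of `(t;T)` and `(s;S)`, a node `i ∈ W` therefore has every
ancestor `j` in the join `sup{t,s}` inside `T ∩ S`: if `j` is to the right of `i`, then `j` is
already an ancestor of `i` in `t` and in `s`, and `T`, `S` are upper ideals containing `W`; if
`j` is to the left of `i`, then `j` is still an ancestor of `i` in `w`, so `j ∈ W`.
-/

namespace PBT

theorem Rot.numNodes_eq {s t : PBT} (h : Rot s t) : s.numNodes = t.numNodes := by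
  induction h with
  | here => simp only [numNodes]; omega
  | left _ _ ih | right _ _ ih => simp only [numNodes, ih]

theorem tamariLE.numNodes_eq {s t : PBT} (h : tamariLE s t) : s.numNodes = t.numNodes := by
  induction h with
  | refl => rfl
  | tail _ hr ih => exact ih.trans hr.numNodes_eq

theorem idx_pos {t : PBT} {p : List Bool} (hp : isNode t p) : 1 ≤ idx t p := by
  induction t generalizing p with
  | leaf => exact hp.elim
  | node l r ihl =>
    rcases p with _ | ⟨_ | _, p⟩
    · simp [idx]
    · exact ihl hp
    · simp only [idx]; omega

theorem idx_le_numNodes {t : PBT} {p : List Bool} (hp : isNode t p) : idx t p ≤ numNodes t := by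
  induction t generalizing p with
  | leaf => exact hp.elim
  | node l r ihl ihr =>
    rcases p with _ | ⟨_ | _, p⟩
    · simp [idx, numNodes]
    · have := ihl hp
      simp only [idx, numNodes]; omega
    · have := ihr hp
      simp only [idx, numNodes]; omega

theorem exists_isNode_idx_eq : ∀ (t : PBT) {i : ℕ}, 1 ≤ i → i ≤ numNodes t →
    ∃ p, isNode t p ∧ idx t p = i
  | leaf, _, h1, h2 => by simp only [numNodes] at h2; omega
  | node l r, i, h1, h2 => by
    rcases lt_trichotomy i (numNodes l + 1) with h | rfl | h
    · obtain ⟨p, hp, hi⟩ := exists_isNode_idx_eq l h1 (by omega)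
      exact ⟨false :: p, hp, hi⟩
    · exact ⟨[], trivial, rfl⟩
    · simp only [numNodes] at h2
      obtain ⟨p, hp, hi⟩ :=
        exists_isNode_idx_eq r (i := i - (numNodes l + 1)) (by omega) (by omega)
      exact ⟨true :: p, hp, by simp only [idx]; omega⟩

theorem nodeLE_self_iff {t : PBT} {j : ℕ} : nodeLE t j j ↔ 1 ≤ j ∧ j ≤ numNodes t := by
  constructor
  · rintro ⟨-, q, -, hq, -, rfl, -⟩
    exact ⟨idx_pos hq, idx_le_numNodes hq⟩
  · rintro ⟨h1, h2⟩
    obtain ⟨p, hp, rfl⟩ := exists_isNode_idx_eq t h1 h2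
    exact ⟨p, p, hp, hp, rfl, rfl, List.prefix_refl p⟩

theorem nodeLE.self_right {t : PBT} {i j : ℕ} (h : nodeLE t i j) : nodeLE t j j := by
  obtain ⟨-, q, -, hq, -, rfl, -⟩ := h
  exact ⟨q, q, hq, hq, rfl, rfl, List.prefix_refl q⟩

theorem nodeLE_node {l r : PBT} {i j : ℕ} :
    nodeLE (node l r) i j ↔
      (j ≤ numNodes l ∧ nodeLE l i j) ∨
      (j = numNodes l + 1 ∧ 1 ≤ i ∧ i ≤ numNodes l + numNodes r + 1) ∨
      (numNodes l + 1 < j ∧ numNodes l + 1 < i ∧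
        nodeLE r (i - (numNodes l + 1)) (j - (numNodes l + 1))) := by
  constructor
  · rintro ⟨p, q, hp, hq, rfl, rfl, hpre⟩
    rcases q with _ | ⟨_ | _, q⟩
    · have h1 := idx_pos hp
      have h2 := idx_le_numNodes hp
      simp only [numNodes] at h2
      exact Or.inr (Or.inl ⟨rfl, h1, h2⟩)
    · obtain ⟨p, rfl, hpre'⟩ := List.cons_prefix_iff.1 hpre
      exact Or.inl ⟨idx_le_numNodes (t := l) hq, p, q, hp, hq, rfl, rfl, hpre'⟩
    · obtain ⟨p, rfl, hpre'⟩ := List.cons_prefix_iff.1 hpre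
      have := idx_pos (t := r) hp
      have := idx_pos (t := r) hq
      refine Or.inr (Or.inr ⟨?_, ?_, p, q, hp, hq, ?_, ?_, hpre'⟩) <;> simp only [idx] <;> omega
  · rintro (⟨-, p, q, hp, hq, rfl, rfl, hpre⟩ | ⟨rfl, h1, h2⟩ |
        ⟨hj, hi, p, q, hp, hq, hpi, hqj, hpre⟩)
    · exact ⟨false :: p, false :: q, hp, hq, rfl, rfl, List.cons_prefix_cons.2 ⟨rfl, hpre⟩⟩
    · obtain ⟨p, hp, rfl⟩ := exists_isNode_idx_eq (node l r) h1 (by simpa only [numNodes])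
      exact ⟨p, [], hp, trivial, rfl, rfl, List.nil_prefix⟩
    · refine ⟨true :: p, true :: q, hp, hq, ?_, ?_, List.cons_prefix_cons.2 ⟨rfl, hpre⟩⟩
      all_goals simp only [idx]; omega

-- The interval `[subtreeStart t j, subtreeEnd t j]` is empty when `j` is not a node of `t`.
def subtreeStart : PBT → ℕ → ℕ
  | leaf, _ => 1
  | node l r, j =>
    if j ≤ numNodes l then subtreeStart l j
    else if j = numNodes l + 1 then 1
    else numNodes l + 1 + subtreeStart r (j - (numNodes l + 1))

def subtreeEnd : PBT → ℕ → ℕ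
  | leaf, _ => 0
  | node l r, j =>
    if j ≤ numNodes l then subtreeEnd l j
    else if j = numNodes l + 1 then numNodes l + numNodes r + 1
    else numNodes l + 1 + subtreeEnd r (j - (numNodes l + 1))

theorem one_le_subtreeStart : ∀ (t : PBT) (j : ℕ), 1 ≤ subtreeStart t j
  | leaf, _ => le_rfl
  | node l r, j => by
    have := one_le_subtreeStart l j
    simp only [subtreeStart]
    split_ifs <;> omega

theorem nodeLE_iff {t : PBT} {i j : ℕ} :
    nodeLE t i j ↔ subtreeStart t j ≤ i ∧ i ≤ subtreeEnd t j := by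
  induction t generalizing i j with
  | leaf =>
    simp only [subtreeStart, subtreeEnd]
    exact ⟨fun ⟨_, _, hp, _⟩ => hp.elim, by omega⟩
  | node l r ihl ihr =>
    have := one_le_subtreeStart r (j - (numNodes l + 1))
    rw [nodeLE_node, ihl, ihr]
    simp only [subtreeStart, subtreeEnd]
    split_ifs <;> omega

theorem Rot.subtreeStart_le {s t : PBT} (h : Rot s t) (j : ℕ) :
    subtreeStart s j ≤ subtreeStart t j := by
  induction h generalizing j with
  | here a b c =>
    have : j - (numNodes (node a b) + 1) = j - (numNodes a + 1) - (numNodes b + 1) := by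
      simp only [numNodes]; omega
    simp only [subtreeStart, this]
    split_ifs <;> simp only [numNodes] at * <;> omega
  | left r h ih =>
    have := ih j
    simp only [subtreeStart, h.numNodes_eq]
    split_ifs <;> omega
  | right l h ih =>
    have := ih (j - (numNodes l + 1))
    simp only [subtreeStart]
    split_ifs <;> omega

theorem Rot.subtreeEnd_le {s t : PBT} (h : Rot s t) (j : ℕ) :
    subtreeEnd s j ≤ subtreeEnd t j := by
  induction h generalizing j with
  | here a b c =>
    have : j - (numNodes (node a b) + 1) = j - (numNodes a + 1) - (numNodes b + 1) := by
      simp only [numNodes]; omega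
    simp only [subtreeEnd, this]
    split_ifs <;> simp only [numNodes] at * <;> omega
  | left r h ih =>
    have := ih j
    simp only [subtreeEnd, h.numNodes_eq]
    split_ifs <;> omega
  | right l h ih =>
    have := ih (j - (numNodes l + 1))
    simp only [subtreeEnd, h.numNodes_eq]
    split_ifs <;> omega

theorem tamariLE.subtreeStart_le {s t : PBT} (h : tamariLE s t) (j : ℕ) :
    subtreeStart s j ≤ subtreeStart t j := by
  induction h with
  | refl => rfl
  | tail _ hr ih => exact ih.trans (hr.subtreeStart_le j)

theorem tamariLE.subtreeEnd_le {s t : PBT} (h : tamariLE s t) (j : ℕ) :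
    subtreeEnd s j ≤ subtreeEnd t j := by
  induction h with
  | refl => rfl
  | tail _ hr ih => exact ih.trans (hr.subtreeEnd_le j)

theorem tamariLE.nodeLE_of_le {s t : PBT} {i j : ℕ} (h : tamariLE s t) (hij : nodeLE t i j)
    (hle : i ≤ j) : nodeLE s i j := by
  have hjs : nodeLE s j j := by
    rw [nodeLE_self_iff, h.numNodes_eq, ← nodeLE_self_iff]
    exact hij.self_right
  rw [nodeLE_iff] at hij hjs ⊢
  exact ⟨(h.subtreeStart_le j).trans hij.1, hle.trans hjs.2⟩

theorem tamariLE.nodeLE_of_ge {s t : PBT} {i j : ℕ} (h : tamariLE s t) (hij : nodeLE s i j)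
    (hge : j ≤ i) : nodeLE t i j := by
  have hjt : nodeLE t j j := by
    rw [nodeLE_self_iff, ← h.numNodes_eq, ← nodeLE_self_iff]
    exact hij.self_right
  rw [nodeLE_iff] at hij hjt ⊢
  exact ⟨hjt.1.trans hge, hij.2.trans (h.subtreeEnd_le j)⟩

end PBT

theorem BLT.mem_T_of_le_of_nodeLE {n : ℕ} {x w : BLT n} (hxw : x ≤ w) {u : PBT}
    (hxu : PBT.tamariLE x.t u) (huw : PBT.tamariLE u w.t) {i j : ℕ} (hi : i ∈ w.T)
    (hij : PBT.nodeLE u i j) : j ∈ x.T := by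
  rcases le_total i j with hle | hge
  · exact x.hideal i j (hxu.nodeLE_of_le hij hle) (hxw.2 hi)
  · exact hxw.2 (w.hideal i j (huw.nodeLE_of_ge hij hge) hi)

/-- In the lattice of bi-leveled trees, the join of `(t;T)` and `(s;S)` is
`(sup{t,s}; U)` where `sup{t,s}` is the join in the Tamari lattice and `U` is the
largest upper order ideal of the node poset of `sup{t,s}` contained in `T ∩ S`,
namely `U = {i | i is a node of sup{t,s} and every node j ≥ i lies in T ∩ S}`. -/
theorem BLT_join (n : ℕ) (x y : BLT n) (u : {t : PBT // t.numNodes = n})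
    (hu : IsLUB {(⟨x.t, x.hn⟩ : {t : PBT // t.numNodes = n}), ⟨y.t, y.hn⟩} u)
    (z : BLT n) (hzt : z.t = u.1)
    (hzT : z.T = {i : ℕ | (∃ p : List Bool, PBT.isNode u.1 p ∧ PBT.idx u.1 p = i) ∧
      ∀ j : ℕ, PBT.nodeLE u.1 i j → j ∈ x.T ∩ y.T}) :
    IsLUB {x, y} z := by
  have hxu : PBT.tamariLE x.t u.1 := hu.1 (Set.mem_insert _ _)
  have hyu : PBT.tamariLE y.t u.1 := hu.1 (Set.mem_insert_of_mem _ rfl)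
  have hzT_sub : z.T ⊆ x.T ∩ y.T := by
    rintro i hi
    rw [hzT] at hi
    obtain ⟨⟨p, hp, rfl⟩, hanc⟩ := hi
    exact hanc _ ⟨p, p, hp, hp, rfl, rfl, List.prefix_refl p⟩
  refine ⟨?_, fun w hw => ?_⟩
  · rintro v (rfl | rfl)
    · exact ⟨hzt ▸ hxu, fun _ hi => (hzT_sub hi).1⟩
    · exact ⟨hzt ▸ hyu, fun _ hi => (hzT_sub hi).2⟩
  have hxw : x ≤ w := hw (Set.mem_insert _ _)
  have hyw : y ≤ w := hw (Set.mem_insert_of_mem _ rfl)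
  have huw : PBT.tamariLE u.1 w.t := by
    refine hu.2 (show (⟨w.t, w.hn⟩ : {t : PBT // t.numNodes = n}) ∈ upperBounds _ from ?_)
    rintro v (rfl | rfl)
    exacts [hxw.1, hyw.1]
  refine ⟨hzt ▸ huw, fun i hi => ?_⟩
  have hi_range := w.hsub hi
  rw [hzT]
  exact ⟨PBT.exists_isNode_idx_eq u.1 hi_range.1 (hi_range.2.trans_eq u.2.symm), fun _ hij =>
    ⟨BLT.mem_T_of_le_of_nodeLE hxw hxu huw hi hij,
      BLT.mem_T_of_le_of_nodeLE hyw hyu huw hi hij⟩⟩
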